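/- arXiv:math/0702495 — 2 statements merged into one kernel-verified Lean document; each statement's English description precedes it below -/
import Mathlib

section
/- For a strictly increasing homeomorphism f of ℝ, the following are equivalent: (i) f is strongly reversible in H(ℝ), i.e., there is an involution σ among the homeomorphisms of ℝ with σ ∘ f ∘ σ = f⁻¹; (ii) there is a strictly decreasing homeomorphism h of ℝ with Γ_f(x) = Γ_f(h(x)) for all x ∈ ℝ; (iii) there is a homeomorphism k of ℝ such that g = k ∘ f ∘ k⁻¹ satisfies η ∘ g ∘ η = g⁻¹, where η(x) = −x; (iv) f is conjugate in H(ℝ) to a homeomorphism g whose graph is symmetric across the line y = −x, i.e., g(−g(x)) = −x for all x ∈ ℝ. -/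
/-!
A strictly decreasing `τ` with `τ² = 1` and `τ f τ = f⁻¹` preserves the signature of `f`, and the
increasing homeomorphism `x ↦ x - τ x` conjugates it to `x ↦ -x`. An increasing reversing
involution is the identity, and then so is `f`.

Conversely, let `h` be a decreasing homeomorphism preserving `Γ_f`. Using `h` on `[p, ∞)` and
`h⁻¹` on `(-∞, p]`, where `p` is the fixed point of `h`, makes `h` an involution. It permutes the
maximal intervals on which `Γ_f` is constant. On such an interval `I` without fixed points, one of
`f`, `f⁻¹` is conjugate to `t ↦ t + 1` by a coordinate sending a fundamental domain `[a, f a)`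
affinely onto `[0, 1)`. The reversing involution is `t ↦ -t` read from the coordinate of `I` into
that of `h I`, and it equals `h` on the fixed points of `f`.
-/

/-- `f` is a homeomorphism of `ℝ`: a bijection of `ℝ` that is continuous in both directions. -/
def IsHomeo (f : Equiv.Perm ℝ) : Prop := Continuous f ∧ Continuous f.symm

/-- The signature Γ_f of a map `f : ℝ → ℝ`: `1`, `0` or `-1` according as `f x > x`,
`f x = x` or `f x < x`. -/
noncomputable def signature (f : ℝ → ℝ) (x : ℝ) : ℝ :=
  if x < f x then 1 else if f x = x then 0 else -1

open Set Function Filter Topology Equiv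

namespace Equiv.Perm

variable {α : Type*} [LinearOrder α] {u : Perm α}

theorem strictMono_inv (hu : StrictMono u) : StrictMono ⇑u⁻¹ := fun x y hxy =>
  hu.lt_iff_lt.mp (by simpa using hxy)

theorem strictAnti_inv (hu : StrictAnti u) : StrictAnti ⇑u⁻¹ := fun x y hxy =>
  hu.lt_iff_gt.mp (by simpa using hxy)

theorem strictMono_zpow (hu : StrictMono u) (n : ℤ) : StrictMono ⇑(u ^ n) := by
  induction n using Int.induction_on with
  | zero => exact strictMono_id
  | succ n ih => rw [zpow_add_one]; exact ih.comp hu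
  | pred n ih => rw [zpow_sub_one]; exact ih.comp (strictMono_inv hu)

theorem strictMono_zpow_apply (hu : StrictMono u) {a : α} (ha : a < u a) :
    StrictMono fun n : ℤ => (u ^ n) a :=
  strictMono_int_of_lt_succ fun n => by
    simpa [zpow_add_one, mul_apply] using strictMono_zpow hu n ha

theorem eq_one_of_strictMono_of_mul_self (hu : StrictMono u) (h : u * u = 1) : u = 1 := by
  ext x
  have hx : u (u x) = x := congr($h x)
  rcases lt_trichotomy (u x) x with hlt | heq | hgt
  · exact absurd (hu hlt) (by rw [hx]; exact hlt.not_gt)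
  · exact heq
  · exact absurd (hu hgt) (by rw [hx]; exact hgt.not_gt)

end Equiv.Perm

theorem Antitone.continuous_of_surjective {α β : Type*} [LinearOrder α] [TopologicalSpace α]
    [OrderTopology α] [LinearOrder β] [TopologicalSpace β] [OrderTopology β] [DenselyOrdered β]
    {f : α → β} (hf : Antitone f) (hs : Surjective f) : Continuous f :=
  Monotone.continuous_of_surjective (β := βᵒᵈ) hf.dual_right hs

theorem Function.Involutive.image_connectedComponentIn {X : Type*} [TopologicalSpace X]
    {h : X → X} (hi : Involutive h) (hc : Continuous h) {F : Set X} {x : X} (hx : x ∈ F) :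
    h '' connectedComponentIn F x = connectedComponentIn (h '' F) (h x) :=
  (Homeomorph.mk (hi.toPerm h) hc hc).image_connectedComponentIn hx

theorem StrictAnti.surjective_id_sub {e : ℝ → ℝ} (he : StrictAnti e) (hc : Continuous e) :
    Surjective fun x => x - e x := by
  refine Continuous.surjective (by fun_prop) ?_ ?_
  · refine tendsto_atTop_mono' _ ?_ (tendsto_atTop_add_const_right _ (-e 0) tendsto_id)
    filter_upwards [eventually_ge_atTop 0] with x hx
    simp only [id]; linarith [he.antitone hx]
  · refine tendsto_atBot_mono' _ ?_ (tendsto_atBot_add_const_right _ (-e 0) tendsto_id)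
    filter_upwards [eventually_le_atBot 0] with x hx
    simp only [id]; linarith [he.antitone hx]

theorem strictAnti_of_forall_mem_image {α β : Type*} [LinearOrder α] [LinearOrder β]
    {B : α → Set α} (hmem : ∀ x, x ∈ B x) (hconn : ∀ x, (B x).OrdConnected)
    (hB : ∀ x y, y ∈ B x → B y = B x) {g h : α → β} (hh : StrictAnti h)
    (hg : ∀ x, g x ∈ h '' B x) (hanti : ∀ x, StrictAntiOn g (B x)) : StrictAnti g := by
  intro x z hxz
  by_cases hz : z ∈ B x
  · exact hanti x (hmem x) hz hxz
  obtain ⟨y, hy, hgx⟩ := hg x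
  obtain ⟨y', hy', hgz⟩ := hg z
  rw [← hgx, ← hgz]
  refine hh (lt_of_not_ge fun hle => hz ?_)
  rcases le_or_gt z y with hzy | hyz
  · exact (hconn x).out (hmem x) hy ⟨hxz.le, hzy⟩
  · have hyz' : y ∈ B z := (hconn z).out hy' (hmem z) ⟨hle, hyz.le⟩
    rw [← hB x y hy, hB z y hyz']
    exact hmem z

theorem isHomeo_of_strictMono {u : Perm ℝ} (hu : StrictMono u) : IsHomeo u :=
  ⟨hu.monotone.continuous_of_surjective u.surjective,
    (Perm.strictMono_inv hu).monotone.continuous_of_surjective u.symm.surjective⟩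

theorem isHomeo_of_strictAnti {u : Perm ℝ} (hu : StrictAnti u) : IsHomeo u :=
  ⟨hu.antitone.continuous_of_surjective u.surjective,
    (Perm.strictAnti_inv hu).antitone.continuous_of_surjective u.symm.surjective⟩

theorem IsHomeo.mul {u v : Perm ℝ} (hu : IsHomeo u) (hv : IsHomeo v) : IsHomeo (u * v) :=
  ⟨hu.1.comp hv.1, hv.2.comp hu.2⟩

theorem IsHomeo.inv {u : Perm ℝ} (hu : IsHomeo u) : IsHomeo u⁻¹ := ⟨hu.2, hu.1⟩

section Signature

variable {g : ℝ → ℝ} {x y : ℝ}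

theorem signature_eq_one_iff : signature g x = 1 ↔ x < g x := by
  unfold signature; split_ifs <;> norm_num [*]

theorem signature_eq_neg_one_iff : signature g x = -1 ↔ g x < x := by
  unfold signature; split_ifs with h₁ h₂
  · norm_num; exact h₁.le
  · norm_num [h₂]
  · norm_num; exact lt_of_le_of_ne (not_lt.mp h₁) h₂

theorem signature_eq_zero_iff : signature g x = 0 ↔ g x = x := by
  unfold signature; split_ifs with h₁ h₂
  · norm_num; exact h₁.ne'
  · norm_num [h₂]
  · norm_num [h₂]

theorem signature_eq_signature (h₁ : x < g x ↔ y < g y) (h₂ : g x < x ↔ g y < y) :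
    signature g x = signature g y := by
  have h₃ : g x = x ↔ g y = y := by
    rw [← not_iff_not]
    simp only [ne_iff_lt_or_gt (a := g x), ne_iff_lt_or_gt (a := g y), h₁, h₂]
  unfold signature
  rw [if_congr h₁ rfl rfl, if_congr h₃ rfl rfl]

end Signature

/-- The affine parametrisation `[0, 1) → [a, u a)` of a fundamental domain of `u`, transported
to `[n, n + 1)` by `u ^ n`. -/
noncomputable def orbitChart (u : Perm ℝ) (a t : ℝ) : ℝ :=
  (u ^ ⌊t⌋) (a + Int.fract t * (u a - a))

noncomputable def orbitCoord (u : Perm ℝ) (a : ℝ) : ℝ → ℝ := invFun (orbitChart u a)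

noncomputable def orbitReflect (u : Perm ℝ) (a b x : ℝ) : ℝ := orbitChart u b (-orbitCoord u a x)

section OrbitChart

variable {u : Perm ℝ} {a : ℝ}

theorem orbitChart_add_one (u : Perm ℝ) (a t : ℝ) :
    orbitChart u a (t + 1) = u (orbitChart u a t) := by
  rw [orbitChart, orbitChart, Int.floor_add_one, Int.fract_add_one, add_comm _ (1 : ℤ),
    zpow_one_add, Perm.mul_apply]

theorem orbitChart_sub_one (u : Perm ℝ) (a t : ℝ) :
    orbitChart u a (t - 1) = u⁻¹ (orbitChart u a t) := by
  rw [← sub_add_cancel t 1, orbitChart_add_one, add_sub_cancel_right, Perm.coe_inv,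
    symm_apply_apply]

theorem add_fract_mul_sub_mem_Ico {a b : ℝ} (hab : a < b) (t : ℝ) :
    a + Int.fract t * (b - a) ∈ Ico a b := by
  have h0 := Int.fract_nonneg t
  have h1 := Int.fract_lt_one t
  constructor <;> nlinarith

theorem strictMono_orbitChart (hu : StrictMono u) (ha : a < u a) :
    StrictMono (orbitChart u a) := by
  intro t s hts
  rcases (Int.floor_mono hts.le).eq_or_lt with heq | hlt
  · rw [orbitChart, orbitChart, heq]
    refine Perm.strictMono_zpow hu _
      (add_lt_add_right (mul_lt_mul_of_pos_right ?_ (sub_pos.2 ha)) a)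
    rw [Int.fract, Int.fract, heq]
    linarith
  · calc orbitChart u a t < (u ^ ⌊t⌋) (u a) :=
          Perm.strictMono_zpow hu _ (add_fract_mul_sub_mem_Ico ha t).2
      _ = (u ^ (⌊t⌋ + 1)) a := by rw [zpow_add_one, Perm.mul_apply]
      _ ≤ (u ^ ⌊s⌋) a := (Perm.strictMono_zpow_apply hu ha).monotone hlt
      _ ≤ orbitChart u a s :=
          (Perm.strictMono_zpow hu _).monotone (add_fract_mul_sub_mem_Ico ha s).1

theorem orbitCoord_orbitChart (hu : StrictMono u) (ha : a < u a) (t : ℝ) :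
    orbitCoord u a (orbitChart u a t) = t :=
  leftInverse_invFun (strictMono_orbitChart hu ha).injective t

end OrbitChart

structure IsUpwardInterval (u : Perm ℝ) (S : Set ℝ) : Prop where
  ordConnected : S.OrdConnected
  lt_apply : ∀ x ∈ S, x < u x
  apply_mem_iff : ∀ x, u x ∈ S ↔ x ∈ S

namespace IsUpwardInterval

variable {u : Perm ℝ} {S : Set ℝ} {a b x : ℝ} (hS : IsUpwardInterval u S) (hu : StrictMono u)
include hS

theorem zpow_apply_mem_iff (n : ℤ) : (u ^ n) x ∈ S ↔ x ∈ S := by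
  induction n using Int.induction_on generalizing x with
  | zero => rfl
  | succ n ih => rw [zpow_add_one, Perm.mul_apply, ih, hS.apply_mem_iff]
  | pred n ih =>
    rw [zpow_sub_one, Perm.mul_apply, ih, ← hS.apply_mem_iff, Perm.coe_inv, apply_symm_apply]

theorem orbitChart_mem (ha : a ∈ S) (t : ℝ) : orbitChart u a t ∈ S := by
  rw [orbitChart, hS.zpow_apply_mem_iff]
  exact hS.ordConnected.out ha ((hS.apply_mem_iff a).2 ha)
    (Ico_subset_Icc_self (add_fract_mul_sub_mem_Ico (hS.lt_apply a ha) t))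

include hu

theorem exists_lt_zpow_apply (ha : a ∈ S) (hx : x ∈ S) : ∃ n : ℤ, x < (u ^ n) a := by
  by_contra! hle
  have hmono : Monotone fun n : ℕ => (u ^ n) a := fun m n hmn => by
    simpa using (Perm.strictMono_zpow_apply hu (hS.lt_apply a ha)).monotone (Int.ofNat_le.2 hmn)
  have hbdd : BddAbove (range fun n : ℕ => (u ^ n) a) :=
    ⟨x, forall_mem_range.2 fun n => by simpa using hle n⟩
  set c := ⨆ n : ℕ, (u ^ n) a
  have hfix : IsFixedPt u c := isFixedPt_of_tendsto_iterate (f := u) (x := a)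
    (tendsto_atTop_ciSup hmono hbdd) (isHomeo_of_strictMono hu).1.continuousAt
  have hc : c ∈ S :=
    hS.ordConnected.out ha hx ⟨le_ciSup hbdd 0, ciSup_le fun n => by simpa using hle n⟩
  exact (hS.lt_apply c hc).ne' hfix

theorem exists_zpow_apply_le (ha : a ∈ S) (hx : x ∈ S) : ∃ n : ℤ, (u ^ n) a ≤ x := by
  by_contra! hlt
  have hanti : Antitone fun n : ℕ => (u⁻¹ ^ n) a := fun m n hmn => by
    simpa [inv_pow] using (Perm.strictMono_zpow_apply hu (hS.lt_apply a ha)).monotone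
      (neg_le_neg (Int.ofNat_le.2 hmn))
  have hbdd : BddBelow (range fun n : ℕ => (u⁻¹ ^ n) a) :=
    ⟨x, forall_mem_range.2 fun n => by simpa [inv_pow] using (hlt (-n)).le⟩
  set c := ⨅ n : ℕ, (u⁻¹ ^ n) a
  have hfix : IsFixedPt ⇑u⁻¹ c := isFixedPt_of_tendsto_iterate (f := ⇑u⁻¹) (x := a)
    (tendsto_atTop_ciInf hanti hbdd) (isHomeo_of_strictMono (Perm.strictMono_inv hu)).1.continuousAt
  have hc : c ∈ S := hS.ordConnected.out hx ha
    ⟨le_ciInf fun n => by simpa [inv_pow] using (hlt (-n)).le, ciInf_le hbdd 0⟩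
  exact (hS.lt_apply c hc).ne' (by simpa using congr(u $hfix).symm)

theorem exists_zpow_apply_mem_Ico (ha : a ∈ S) (hx : x ∈ S) :
    ∃ n : ℤ, (u ^ n) a ≤ x ∧ x < (u ^ (n + 1)) a := by
  have hmono := Perm.strictMono_zpow_apply hu (hS.lt_apply a ha)
  obtain ⟨N, hN⟩ := hS.exists_lt_zpow_apply hu ha hx
  obtain ⟨n, hn, hmax⟩ := Int.exists_greatest_of_bdd
    ⟨N, fun m hm => (hmono.lt_iff_lt.1 (hm.trans_lt hN)).le⟩ (hS.exists_zpow_apply_le hu ha hx)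
  exact ⟨n, hn, not_le.1 fun h => by linarith [hmax _ h]⟩

theorem exists_orbitChart_eq (ha : a ∈ S) (hx : x ∈ S) : ∃ t, orbitChart u a t = x := by
  have hua := sub_pos.2 (hS.lt_apply a ha)
  obtain ⟨n, h₁, h₂⟩ := hS.exists_zpow_apply_mem_Ico hu ha hx
  have hn := Perm.strictMono_inv (Perm.strictMono_zpow hu n)
  set y := (u ^ n)⁻¹ x
  have hy : (u ^ n) y = x := by simp [y]
  have hy₁ : a ≤ y := by simpa [y] using hn.monotone h₁
  have hy₂ : y < u a := by simpa [y, zpow_add_one] using hn h₂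
  have hr : (y - a) / (u a - a) ∈ Ico 0 1 :=
    ⟨div_nonneg (by linarith) hua.le, (div_lt_one hua).2 (by linarith)⟩
  refine ⟨n + (y - a) / (u a - a), ?_⟩
  rw [orbitChart, Int.floor_intCast_add, Int.fract_intCast_add, Int.fract_eq_self.2 hr,
    Int.floor_eq_zero_iff.2 hr, add_zero, div_mul_cancel₀ _ hua.ne', add_sub_cancel, hy]

theorem orbitChart_orbitCoord (ha : a ∈ S) (hx : x ∈ S) :
    orbitChart u a (orbitCoord u a x) = x :=
  invFun_eq (hS.exists_orbitChart_eq hu ha hx)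

theorem orbitCoord_apply (ha : a ∈ S) (hx : x ∈ S) :
    orbitCoord u a (u x) = orbitCoord u a x + 1 := by
  conv_lhs => rw [← hS.orbitChart_orbitCoord hu ha hx, ← orbitChart_add_one]
  exact orbitCoord_orbitChart hu (hS.lt_apply a ha) _

theorem strictMonoOn_orbitCoord (ha : a ∈ S) : StrictMonoOn (orbitCoord u a) S := by
  intro x hx y hy hxy
  rwa [← (strictMono_orbitChart hu (hS.lt_apply a ha)).lt_iff_lt,
    hS.orbitChart_orbitCoord hu ha hx, hS.orbitChart_orbitCoord hu ha hy]

theorem orbitReflect_orbitReflect (ha : a ∈ S) (hb : b < u b) (hx : x ∈ S) :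
    orbitReflect u b a (orbitReflect u a b x) = x := by
  rw [orbitReflect, orbitReflect, orbitCoord_orbitChart hu hb, neg_neg,
    hS.orbitChart_orbitCoord hu ha hx]

theorem orbitReflect_apply (ha : a ∈ S) (hx : x ∈ S) :
    orbitReflect u a b (u x) = u⁻¹ (orbitReflect u a b x) := by
  rw [orbitReflect, orbitReflect, hS.orbitCoord_apply hu ha hx, neg_add, ← sub_eq_add_neg,
    orbitChart_sub_one]

theorem orbitReflect_inv_apply (ha : a ∈ S) (hx : x ∈ S) :
    orbitReflect u a b (u⁻¹ x) = u (orbitReflect u a b x) := by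
  have hx' : u⁻¹ x ∈ S := by rwa [← hS.apply_mem_iff, Perm.coe_inv, apply_symm_apply]
  simpa using congr(u $(hS.orbitReflect_apply hu (b := b) ha hx')).symm

theorem strictAntiOn_orbitReflect (ha : a ∈ S) (hb : b < u b) :
    StrictAntiOn (orbitReflect u a b) S := fun _ hx _ hy hxy =>
  strictMono_orbitChart hu hb (neg_lt_neg (hS.strictMonoOn_orbitCoord hu ha hx hy hxy))

end IsUpwardInterval

theorem isUpwardInterval_connectedComponentIn {u : Perm ℝ} (hu : StrictMono u) {x : ℝ}
    (hx : x < u x) : IsUpwardInterval u (connectedComponentIn {y | y < u y} x) := by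
  set U := {y | y < u y}
  have hU : u '' U = U := by
    ext y
    simp only [U, Equiv.image_eq_preimage_symm, mem_preimage, mem_ofPred]
    rw [← hu.lt_iff_lt, apply_symm_apply]
  have hux : u x ∈ connectedComponentIn U x := by
    refine isPreconnected_Icc.subset_connectedComponentIn (left_mem_Icc.2 hx.le) (fun y hy => ?_)
      (right_mem_Icc.2 hx.le)
    rcases hy.2.lt_or_eq with hlt | rfl
    · exact hlt.trans_le (hu.monotone hy.1)
    · exact hu hx
  have hC : u '' connectedComponentIn U x = connectedComponentIn U x := by
    have hu' := isHomeo_of_strictMono hu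
    have hcomp : u '' connectedComponentIn U x = connectedComponentIn (u '' U) (u x) :=
      (Homeomorph.mk u hu'.1 hu'.2).image_connectedComponentIn hx
    rw [hcomp, hU, ← connectedComponentIn_eq hux]
  refine ⟨isPreconnected_connectedComponentIn.ordConnected,
    fun y hy => connectedComponentIn_subset U x hy, fun y => ?_⟩
  conv_lhs => rw [← hC]
  exact u.injective.mem_set_image

noncomputable def levelBlock (f : ℝ → ℝ) (x : ℝ) : Set ℝ :=
  connectedComponentIn {y | signature f y = signature f x} x

noncomputable def upMap (f : Perm ℝ) (x : ℝ) : Perm ℝ := if x < f x then f else f⁻¹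

noncomputable def basePoint (S : Set ℝ) : ℝ := Classical.epsilon (· ∈ S)

section LevelBlock

variable {f : Perm ℝ} {x y : ℝ}

theorem mem_levelBlock_self : x ∈ levelBlock f x := mem_connectedComponentIn rfl

theorem basePoint_levelBlock_mem : basePoint (levelBlock f x) ∈ levelBlock f x :=
  Classical.epsilon_spec ⟨x, mem_levelBlock_self⟩

theorem signature_eq_of_mem_levelBlock (hy : y ∈ levelBlock f x) :
    signature f y = signature f x :=
  connectedComponentIn_subset {y | signature f y = signature f x} x hy

theorem levelBlock_eq_of_mem (hy : y ∈ levelBlock f x) : levelBlock f y = levelBlock f x := by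
  rw [levelBlock, levelBlock, signature_eq_of_mem_levelBlock hy]
  exact (connectedComponentIn_eq hy).symm

theorem upMap_eq_of_signature_eq (h : signature f y = signature f x) : upMap f y = upMap f x := by
  simp only [upMap, ← signature_eq_one_iff, h]

theorem strictMono_upMap (hf : StrictMono f) : StrictMono (upMap f x) := by
  unfold upMap
  split_ifs
  exacts [hf, Perm.strictMono_inv hf]

theorem isUpwardInterval_levelBlock (hf : StrictMono f) (hx : f x ≠ x) :
    IsUpwardInterval (upMap f x) (levelBlock f x) := by
  have hlevel : {y | signature f y = signature f x} = {y | y < upMap f x y} := by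
    ext y
    unfold upMap
    split_ifs with h
    · simp [signature_eq_one_iff.2 h, signature_eq_one_iff]
    · simp only [mem_ofPred]
      rw [signature_eq_neg_one_iff.2 (lt_of_le_of_ne (not_lt.1 h) hx),
        signature_eq_neg_one_iff, ← (Perm.strictMono_inv hf).lt_iff_lt, Perm.coe_inv,
        symm_apply_apply]
  have hx' : x < upMap f x x := by
    unfold upMap
    split_ifs with h
    · exact h
    · simpa using (Perm.strictMono_inv hf) (lt_of_le_of_ne (not_lt.1 h) hx)
  rw [levelBlock, hlevel]
  exact isUpwardInterval_connectedComponentIn (strictMono_upMap hf) hx'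

theorem apply_mem_levelBlock (hf : StrictMono f) : f x ∈ levelBlock f x := by
  by_cases hx : f x = x
  · rw [hx]; exact mem_levelBlock_self
  have hS := isUpwardInterval_levelBlock hf hx
  unfold upMap at hS
  split_ifs at hS
  · exact (hS.apply_mem_iff x).2 mem_levelBlock_self
  · exact (hS.apply_mem_iff (f x)).1 (by simpa using mem_levelBlock_self)

theorem image_levelBlock {h : ℝ → ℝ} (hc : Continuous h) (hi : Involutive h)
    (hsig : ∀ x, signature f (h x) = signature f x) :
    h '' levelBlock f x = levelBlock f (h x) := by
  rw [levelBlock, hi.image_connectedComponentIn hc (F := {y | signature f y = signature f x}) rfl,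
    levelBlock, hsig, image_eq_preimage_of_inverse hi.leftInverse hi.rightInverse]
  congr 1
  ext y
  simp only [mem_preimage, mem_ofPred, hsig]

end LevelBlock

noncomputable def reversal (f : Perm ℝ) (h : ℝ → ℝ) (x : ℝ) : ℝ :=
  if f x = x then h x
  else orbitReflect (upMap f x) (basePoint (levelBlock f x)) (basePoint (levelBlock f (h x))) x

section Reversal

variable {f : Perm ℝ} {h : ℝ → ℝ} {x y : ℝ} (hf : StrictMono f) (hh : StrictAnti h)
  (hi : Involutive h) (hsig : ∀ x, signature f (h x) = signature f x)

theorem reversal_eq_of_apply_eq (hx : f x = x) : reversal f h x = h x := if_pos hx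

include hsig in
theorem apply_eq_self_iff_of_signature : f (h x) = h x ↔ f x = x := by
  rw [← signature_eq_zero_iff, ← signature_eq_zero_iff (g := f), hsig]

include hf hsig in
theorem isUpwardInterval_levelBlock_apply (hx : f x ≠ x) :
    IsUpwardInterval (upMap f x) (levelBlock f (h x)) := by
  rw [← upMap_eq_of_signature_eq (hsig x)]
  exact isUpwardInterval_levelBlock hf ((apply_eq_self_iff_of_signature hsig).not.2 hx)

include hh hi hsig in
theorem levelBlock_apply_eq_of_mem (hy : y ∈ levelBlock f x) :
    levelBlock f (h y) = levelBlock f (h x) := by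
  have hc := hh.antitone.continuous_of_surjective hi.surjective
  rw [← image_levelBlock hc hi hsig, ← image_levelBlock hc hi hsig, levelBlock_eq_of_mem hy]

include hh hi hsig in
theorem reversal_eq_orbitReflect_of_mem (hx : f x ≠ x) (hy : y ∈ levelBlock f x) :
    reversal f h y =
      orbitReflect (upMap f x) (basePoint (levelBlock f x)) (basePoint (levelBlock f (h x))) y := by
  have hsy := signature_eq_of_mem_levelBlock hy
  have hy' : f y ≠ y := by rwa [ne_eq, ← signature_eq_zero_iff, hsy, signature_eq_zero_iff]
  rw [reversal, if_neg hy', upMap_eq_of_signature_eq hsy, levelBlock_eq_of_mem hy,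
    levelBlock_apply_eq_of_mem hh hi hsig hy]

include hf hsig in
theorem reversal_mem_levelBlock (hx : f x ≠ x) : reversal f h x ∈ levelBlock f (h x) := by
  rw [reversal, if_neg hx]
  exact (isUpwardInterval_levelBlock_apply hf hsig hx).orbitChart_mem basePoint_levelBlock_mem _

include hf hh hi hsig in
theorem reversal_involutive : Involutive (reversal f h) := by
  intro x
  by_cases hx : f x = x
  · rw [reversal_eq_of_apply_eq hx,
      reversal_eq_of_apply_eq ((apply_eq_self_iff_of_signature hsig).2 hx), hi]
  have hx' : f (h x) ≠ h x := (apply_eq_self_iff_of_signature hsig).not.2 hx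
  rw [reversal_eq_orbitReflect_of_mem hh hi hsig hx' (reversal_mem_levelBlock hf hsig hx), hi,
    upMap_eq_of_signature_eq (hsig x), reversal, if_neg hx]
  exact (isUpwardInterval_levelBlock hf hx).orbitReflect_orbitReflect (strictMono_upMap hf)
    basePoint_levelBlock_mem
    ((isUpwardInterval_levelBlock_apply hf hsig hx).lt_apply _ basePoint_levelBlock_mem)
    mem_levelBlock_self

include hf hh hi hsig in
theorem reversal_apply_eq_inv_apply : reversal f h (f x) = f⁻¹ (reversal f h x) := by
  by_cases hx : f x = x
  · rw [hx, reversal_eq_of_apply_eq hx, eq_comm, Perm.inv_eq_iff_eq]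
    exact ((apply_eq_self_iff_of_signature hsig).2 hx).symm
  have hS := isUpwardInterval_levelBlock hf hx
  have hu := strictMono_upMap (x := x) hf
  rw [reversal_eq_orbitReflect_of_mem hh hi hsig hx (apply_mem_levelBlock hf),
    reversal_eq_orbitReflect_of_mem hh hi hsig hx mem_levelBlock_self]
  unfold upMap at hS hu ⊢
  split_ifs at hS hu ⊢
  · exact hS.orbitReflect_apply hu basePoint_levelBlock_mem mem_levelBlock_self
  · simpa using hS.orbitReflect_inv_apply hu basePoint_levelBlock_mem mem_levelBlock_self

include hf hh hi hsig in
theorem strictAnti_reversal : StrictAnti (reversal f h) := by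
  refine strictAnti_of_forall_mem_image (B := levelBlock f) (fun x => mem_levelBlock_self)
    (fun x => isPreconnected_connectedComponentIn.ordConnected) (fun x y => levelBlock_eq_of_mem)
    hh (fun x => ?_) (fun x => ?_)
  · by_cases hx : f x = x
    · rw [reversal_eq_of_apply_eq hx]
      exact mem_image_of_mem h mem_levelBlock_self
    · rw [image_levelBlock (hh.antitone.continuous_of_surjective hi.surjective) hi hsig]
      exact reversal_mem_levelBlock hf hsig hx
  · by_cases hx : f x = x
    · refine hh.strictAntiOn _ |>.congr fun y hy => ?_
      have hy' : f y = y := by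
        rwa [← signature_eq_zero_iff, signature_eq_of_mem_levelBlock hy, signature_eq_zero_iff]
      rw [reversal_eq_of_apply_eq hy']
    · refine ((isUpwardInterval_levelBlock hf hx).strictAntiOn_orbitReflect (strictMono_upMap hf)
        basePoint_levelBlock_mem
        ((isUpwardInterval_levelBlock_apply hf hsig hx).lt_apply _ basePoint_levelBlock_mem)).congr
        fun y hy => (reversal_eq_orbitReflect_of_mem hh hi hsig hx hy).symm

end Reversal

theorem exists_reversing_involution_of_signature {f : Perm ℝ} {h : ℝ → ℝ} (hf : StrictMono f)
    (hh : StrictAnti h) (hi : Involutive h) (hsig : ∀ x, signature f (h x) = signature f x) :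
    ∃ σ : Perm ℝ, StrictAnti σ ∧ σ * σ = 1 ∧ σ * f * σ = f⁻¹ := by
  have hinv := reversal_involutive hf hh hi hsig
  refine ⟨hinv.toPerm _, strictAnti_reversal hf hh hi hsig, Perm.ext hinv, Perm.ext fun x => ?_⟩
  change reversal f h (f (reversal f h x)) = f⁻¹ x
  rw [reversal_apply_eq_inv_apply hf hh hi hsig, hinv]

theorem exists_involutive_strictAnti_of_strictAnti {e : Perm ℝ} (he : StrictAnti e) :
    ∃ h : ℝ → ℝ, Involutive h ∧ StrictAnti h ∧ ∀ x, h x = e x ∨ h x = e⁻¹ x := by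
  have he' := Perm.strictAnti_inv he
  obtain ⟨p, hp⟩ := he.surjective_id_sub (he.antitone.continuous_of_surjective e.surjective) 0
  replace hp : e p = p := by simp only at hp; linarith
  have hp' : e⁻¹ p = p := by rw [Perm.inv_eq_iff_eq, hp]
  refine ⟨fun x => if p ≤ x then e x else e⁻¹ x, fun x => ?_, fun x y hxy => ?_,
    fun x => by dsimp only; split_ifs <;> simp⟩
  · dsimp only
    by_cases hx : p ≤ x
    · rcases (hp ▸ he.antitone hx : e x ≤ p).lt_or_eq with hlt | heq
      · rw [if_pos hx, if_neg hlt.not_ge]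
        simp
      · obtain rfl : x = p := e.injective (heq.trans hp.symm)
        simp [hp]
    · rw [if_neg hx, if_pos (hp' ▸ he' (not_le.1 hx)).le]
      simp
  · dsimp only
    split_ifs with hy hx hx
    · exact he hxy
    · exact (hp ▸ he.antitone hy).trans_lt (hp' ▸ he' (not_le.1 hx))
    · exact absurd (hx.trans hxy.le) hy
    · exact he' hxy

theorem strictAnti_neg : StrictAnti (Equiv.neg ℝ) := fun _ _ h => neg_lt_neg h

theorem exists_reverses_iff_strictAnti {f : Perm ℝ} (hf : StrictMono f) :
    (∃ σ : Perm ℝ, IsHomeo σ ∧ σ * σ = 1 ∧ σ * f * σ = f⁻¹) ↔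
      ∃ τ : Perm ℝ, StrictAnti τ ∧ τ * τ = 1 ∧ τ * f * τ = f⁻¹ := by
  refine ⟨fun ⟨σ, hσ, h2, h3⟩ => ?_,
    fun ⟨τ, hτ, h2, h3⟩ => ⟨τ, isHomeo_of_strictAnti hτ, h2, h3⟩⟩
  rcases hσ.1.strictMono_of_inj σ.injective with hmono | hanti
  · obtain rfl := Perm.eq_one_of_strictMono_of_mul_self hmono h2
    obtain rfl : f = 1 := Perm.eq_one_of_strictMono_of_mul_self hf (by simpa using congr(f * $h3))
    exact ⟨Equiv.neg ℝ, strictAnti_neg, by ext; simp, by ext; simp⟩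
  · exact ⟨σ, hanti, h2, h3⟩

theorem signature_apply_of_reverses {f τ : Perm ℝ} (hf : StrictMono f) (hτ : StrictAnti τ)
    (h2 : τ * τ = 1) (h3 : τ * f * τ = f⁻¹) (x : ℝ) : signature f x = signature f (τ x) := by
  have hfτ : f (τ x) = τ (f⁻¹ x) := by
    rw [← Perm.mul_apply, ← h3, ← Perm.mul_apply, ← mul_assoc, ← mul_assoc, h2, one_mul]
  apply signature_eq_signature
  · rw [hfτ, hτ.lt_iff_gt]
    simpa using hf.lt_iff_lt (a := f⁻¹ x) (b := x)
  · rw [hfτ, hτ.lt_iff_gt]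
    simpa using ((Perm.strictMono_inv hf).lt_iff_lt (a := f x) (b := x)).symm

theorem exists_strictMono_conj_neg {τ : Perm ℝ} (hτ : StrictAnti τ) (h2 : τ * τ = 1) :
    ∃ k : Perm ℝ, StrictMono k ∧ k * τ * k⁻¹ = Equiv.neg ℝ := by
  have hk : StrictMono fun x => x - τ x := fun x y hxy => sub_lt_sub hxy (hτ hxy)
  have hc := hτ.antitone.continuous_of_surjective τ.surjective
  refine ⟨Equiv.ofBijective _ ⟨hk.injective, hτ.surjective_id_sub hc⟩, hk, ?_⟩
  rw [mul_inv_eq_iff_eq_mul]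
  ext x
  change τ x - τ (τ x) = -(x - τ x)
  rw [show τ (τ x) = x from congr($h2 x)]
  ring

theorem conj_neg_reverses {f τ k : Perm ℝ} (hk : k * τ * k⁻¹ = Equiv.neg ℝ)
    (h3 : τ * f * τ = f⁻¹) :
    Equiv.neg ℝ * (k * f * k⁻¹) * Equiv.neg ℝ = (k * f * k⁻¹)⁻¹ := by
  rw [← hk]
  calc k * τ * k⁻¹ * (k * f * k⁻¹) * (k * τ * k⁻¹) = k * (τ * f * τ) * k⁻¹ := by group
    _ = (k * f * k⁻¹)⁻¹ := by rw [h3]; group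

theorem neg_apply_neg_iff {g : Perm ℝ} :
    (∀ x, -g (-x) = g⁻¹ x) ↔ ∀ x, g (-g x) = -x := by
  refine ⟨fun h x => ?_, fun h x => ?_⟩
  · simpa using congr(-$(h (g x)))
  · rw [eq_comm, Perm.inv_eq_iff_eq, ← neg_neg x, h, neg_neg, neg_neg]

theorem exists_strictAnti_reverses_iff_signature {f : Perm ℝ} (hf : StrictMono f) :
    (∃ τ : Perm ℝ, StrictAnti τ ∧ τ * τ = 1 ∧ τ * f * τ = f⁻¹) ↔
      ∃ h : Perm ℝ, IsHomeo h ∧ StrictAnti h ∧ ∀ x, signature f x = signature f (h x) := by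
  refine ⟨fun ⟨τ, hτ, h2, h3⟩ =>
    ⟨τ, isHomeo_of_strictAnti hτ, hτ, signature_apply_of_reverses hf hτ h2 h3⟩,
    fun ⟨e, _, he, hsig⟩ => ?_⟩
  obtain ⟨h, hi, hh, hhe⟩ := exists_involutive_strictAnti_of_strictAnti he
  refine exists_reversing_involution_of_signature hf hh hi fun x => ?_
  rcases hhe x with hx | hx <;> rw [hx]
  · exact (hsig x).symm
  · simpa using hsig (e⁻¹ x)

theorem exists_strictAnti_reverses_iff_conj_neg {f : Perm ℝ} (hf : StrictMono f) :
    (∃ τ : Perm ℝ, StrictAnti τ ∧ τ * τ = 1 ∧ τ * f * τ = f⁻¹) ↔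
      ∃ k : Perm ℝ, IsHomeo k ∧ ∀ x, -(k * f * k⁻¹) (-x) = (k * f * k⁻¹)⁻¹ x := by
  constructor
  · rintro ⟨τ, hτ, h2, h3⟩
    obtain ⟨k, hk, hkτ⟩ := exists_strictMono_conj_neg hτ h2
    exact ⟨k, isHomeo_of_strictMono hk, fun x => congr($(conj_neg_reverses hkτ h3) x)⟩
  · rintro ⟨k, hk, hg⟩
    have hneg : Equiv.neg ℝ * Equiv.neg ℝ = 1 := by ext; simp
    replace hg : Equiv.neg ℝ * (k * f * k⁻¹) * Equiv.neg ℝ = (k * f * k⁻¹)⁻¹ := Perm.ext hg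
    refine (exists_reverses_iff_strictAnti hf).1 ⟨k⁻¹ * Equiv.neg ℝ * k,
      (hk.inv.mul (isHomeo_of_strictAnti strictAnti_neg)).mul hk, ?_, ?_⟩
    · calc k⁻¹ * Equiv.neg ℝ * k * (k⁻¹ * Equiv.neg ℝ * k)
          = k⁻¹ * (Equiv.neg ℝ * Equiv.neg ℝ) * k := by group
        _ = 1 := by rw [hneg]; group
    · calc k⁻¹ * Equiv.neg ℝ * k * f * (k⁻¹ * Equiv.neg ℝ * k)
          = k⁻¹ * (Equiv.neg ℝ * (k * f * k⁻¹) * Equiv.neg ℝ) * k := by group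
        _ = f⁻¹ := by rw [hg]; group

theorem stmt_17_general (f : Equiv.Perm ℝ) (hfm : StrictMono (⇑f)) :
    ((∃ σ : Equiv.Perm ℝ, IsHomeo σ ∧ σ * σ = 1 ∧ σ * f * σ = f⁻¹) ↔
      (∃ h : Equiv.Perm ℝ, IsHomeo h ∧ StrictAnti (⇑h) ∧
        ∀ x : ℝ, signature (⇑f) x = signature (⇑f) (h x))) ∧
    ((∃ σ : Equiv.Perm ℝ, IsHomeo σ ∧ σ * σ = 1 ∧ σ * f * σ = f⁻¹) ↔
      (∃ k : Equiv.Perm ℝ, IsHomeo k ∧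
        ∀ x : ℝ, -((k * f * k⁻¹) (-x)) = (k * f * k⁻¹)⁻¹ x)) ∧
    ((∃ σ : Equiv.Perm ℝ, IsHomeo σ ∧ σ * σ = 1 ∧ σ * f * σ = f⁻¹) ↔
      (∃ k : Equiv.Perm ℝ, IsHomeo k ∧
        ∀ x : ℝ, (k * f * k⁻¹) (-((k * f * k⁻¹) x)) = -x)) := by
  have hiii := (exists_reverses_iff_strictAnti hfm).trans
    (exists_strictAnti_reverses_iff_conj_neg hfm)
  exact ⟨(exists_reverses_iff_strictAnti hfm).trans (exists_strictAnti_reverses_iff_signature hfm),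
    hiii, by simpa only [neg_apply_neg_iff] using hiii⟩

/-- For a strictly increasing homeomorphism f of ℝ the following are equivalent:
(i) f is strongly reversible in H(ℝ); (ii) Γ_f = Γ_f ∘ h for some strictly decreasing
homeomorphism h; (iii) f is conjugate to a homeomorphism g with η g η = g⁻¹, where
η(x) = -x; (iv) f is conjugate to a homeomorphism whose graph is symmetric across the
line y = -x. -/
theorem stmt_17 (f : Equiv.Perm ℝ) (hf : IsHomeo f) (hfm : StrictMono (⇑f)) :
    ((∃ σ : Equiv.Perm ℝ, IsHomeo σ ∧ σ * σ = 1 ∧ σ * f * σ = f⁻¹) ↔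
      (∃ h : Equiv.Perm ℝ, IsHomeo h ∧ StrictAnti (⇑h) ∧
        ∀ x : ℝ, signature (⇑f) x = signature (⇑f) (h x))) ∧
    ((∃ σ : Equiv.Perm ℝ, IsHomeo σ ∧ σ * σ = 1 ∧ σ * f * σ = f⁻¹) ↔
      (∃ k : Equiv.Perm ℝ, IsHomeo k ∧
        ∀ x : ℝ, -((k * f * k⁻¹) (-x)) = (k * f * k⁻¹)⁻¹ x)) ∧
    ((∃ σ : Equiv.Perm ℝ, IsHomeo σ ∧ σ * σ = 1 ∧ σ * f * σ = f⁻¹) ↔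
      (∃ k : Equiv.Perm ℝ, IsHomeo k ∧
        ∀ x : ℝ, (k * f * k⁻¹) (-((k * f * k⁻¹) x)) = -x)) :=
  stmt_17_general f hfm
end

section
/- Suppose f ∈ PLF(ℝ) can be written as a composite of finitely many involutions belonging to PLF(ℝ). Then the leftmost and rightmost gradients of f satisfy γ_R(f) · γ_L(f) = 1; that is, if there are real numbers a_L, b_L, a_R, b_R and M > 0 with f(x) = a_L·x + b_L for all x ≤ −M and f(x) = a_R·x + b_R for all x ≥ M, then a_R · a_L = 1. In particular, the map x ↦ 2x is not a composite of finitely many involutions of PLF(ℝ). -/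
/-- `f` is locally affine at `x`: it agrees with an affine map on a neighbourhood of `x`. -/
def IsLocallyAffineAt (f : ℝ → ℝ) (x : ℝ) : Prop :=
  ∃ a b : ℝ, ∀ᶠ y in nhds x, f y = a * y + b

/-- Membership in PLF(ℝ): a homeomorphism of `ℝ` that is locally affine at all but
finitely many points. -/
def InPLF (f : Equiv.Perm ℝ) : Prop :=
  IsHomeo f ∧ {x : ℝ | ¬ IsLocallyAffineAt (⇑f) x}.Finite

/-- Membership in PL(ℝ): a homeomorphism of `ℝ` whose set of points of non-local-affinity
has no accumulation point in `ℝ`. -/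
def InPL (f : Equiv.Perm ℝ) : Prop :=
  IsHomeo f ∧ ∀ x : ℝ, ¬ AccPt x (Filter.principal {y : ℝ | ¬ IsLocallyAffineAt (⇑f) y})

open Filter Set Topology Function

def EventuallyAffine (f : ℝ → ℝ) (l : Filter ℝ) (a : ℝ) : Prop :=
  ∃ b : ℝ, ∀ᶠ x in l, f x = a * x + b

def HasEndGradients (f : ℝ → ℝ) (aL aR : ℝ) : Prop :=
  EventuallyAffine f atBot aL ∧ EventuallyAffine f atTop aR

theorem affine_eq_of_eventually_eq {l : Filter ℝ} [l.NeBot] {a b a' b' : ℝ} (hl : l ≤ cofinite)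
    (h : ∀ᶠ x in l, a * x + b = a' * x + b') : a = a' ∧ b = b' := by
  have ha : a = a' := by
    by_contra hne
    obtain ⟨x, hx, hx₀⟩ :=
      (h.and (le_cofinite_iff_eventually_ne.1 hl ((b' - b) / (a - a')))).exists
    apply hx₀
    field_simp [sub_ne_zero.2 hne]
    linarith
  obtain ⟨x, hx⟩ := h.exists
  subst ha
  exact ⟨rfl, by linarith⟩

namespace EventuallyAffine

variable {f g : ℝ → ℝ} {l l' : Filter ℝ} {a a' c : ℝ}

theorem unique [l.NeBot] (hl : l ≤ cofinite) (h : EventuallyAffine f l a)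
    (h' : EventuallyAffine f l a') : a = a' := by
  obtain ⟨b, hb⟩ := h
  obtain ⟨b', hb'⟩ := h'
  refine (affine_eq_of_eventually_eq (b := b) (b' := b') hl ?_).1
  filter_upwards [hb, hb'] with x hx hx'
  rw [← hx, hx']

theorem comp (hf : EventuallyAffine f l' a) (hg : EventuallyAffine g l c)
    (hgl : Tendsto g l l') : EventuallyAffine (f ∘ g) l (a * c) := by
  obtain ⟨bf, hbf⟩ := hf
  obtain ⟨bg, hbg⟩ := hg
  refine ⟨a * bg + bf, ?_⟩
  filter_upwards [hbg, hgl.eventually hbf] with x hgx hfgx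
  rw [comp_apply, hfgx, hgx]
  ring

theorem tendsto_atTop (hg : EventuallyAffine g l c) (h : Tendsto (fun x => c * x) l atTop) :
    Tendsto g l atTop :=
  let ⟨b, hb⟩ := hg
  (tendsto_atTop_add_const_right l b h).congr' (hb.mono fun _ hx => hx.symm)

theorem tendsto_atBot (hg : EventuallyAffine g l c) (h : Tendsto (fun x => c * x) l atBot) :
    Tendsto g l atBot :=
  let ⟨b, hb⟩ := hg
  (tendsto_atBot_add_const_right l b h).congr' (hb.mono fun _ hx => hx.symm)

theorem exists_lt_sub_eq [l.NeBot] (hl : l ≤ cofinite) (h : EventuallyAffine f l a) :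
    ∃ x y, x < y ∧ f y - f x = a * (y - x) := by
  obtain ⟨b, hb⟩ := h
  obtain ⟨x, hx⟩ := hb.exists
  obtain ⟨y, hy, hyx⟩ := (hb.and (le_cofinite_iff_eventually_ne.1 hl x)).exists
  rcases hyx.lt_or_gt with hlt | hlt
  · exact ⟨y, x, hlt, by rw [hx, hy]; ring⟩
  · exact ⟨x, y, hlt, by rw [hx, hy]; ring⟩

theorem pos_of_strictMono [l.NeBot] (hl : l ≤ cofinite) (h : EventuallyAffine f l a)
    (hf : StrictMono f) : 0 < a := by
  obtain ⟨x, y, hxy, hslope⟩ := h.exists_lt_sub_eq hl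
  have := hf hxy
  nlinarith

theorem neg_of_strictAnti [l.NeBot] (hl : l ≤ cofinite) (h : EventuallyAffine f l a)
    (hf : StrictAnti f) : a < 0 := by
  obtain ⟨x, y, hxy, hslope⟩ := h.exists_lt_sub_eq hl
  have := hf hxy
  nlinarith

end EventuallyAffine

theorem IsPreconnected.eqOn_affine_of_isLocallyAffineAt {f : ℝ → ℝ} {s : Set ℝ}
    (hs : IsPreconnected s) (hf : ∀ x ∈ s, IsLocallyAffineAt f x) {x₀ a b : ℝ} (hx₀ : x₀ ∈ s)
    (h₀ : ∀ᶠ y in 𝓝 x₀, f y = a * y + b) : EqOn f (fun y => a * y + b) s := by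
  set u := {x | ∀ᶠ y in 𝓝 x, f y = a * y + b}
  suffices hsu : s ⊆ u from fun x hx => (hsu hx).self_of_nhds
  refine hs.subset_of_closure_inter_subset isOpen_setOfPred_eventually_nhds ⟨x₀, hx₀, h₀⟩ ?_
  rintro x ⟨hxu, hxs⟩
  obtain ⟨a', b', hx⟩ := hf x hxs
  -- a point `z ∈ u` close to `x` sees both affine maps on a neighbourhood, so they coincide
  obtain ⟨z, hzu, hz⟩ := ((mem_closure_iff_frequently.1 hxu).and_eventually hx.eventually_nhds).exists
  have hzz : ∀ᶠ y in 𝓝[≠] z, a * y + b = a' * y + b' := by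
    filter_upwards [nhdsWithin_le_nhds hzu, nhdsWithin_le_nhds hz] with y hy hy'
    rw [← hy, hy']
  obtain ⟨rfl, rfl⟩ := affine_eq_of_eventually_eq (nhdsNE_le_cofinite z) hzz
  exact hx

theorem exists_eventuallyAffine_of_isPreconnected {f : ℝ → ℝ} {l : Filter ℝ} [l.NeBot]
    {s : Set ℝ} (hs : IsPreconnected s) (hsl : s ∈ l) (hf : ∀ x ∈ s, IsLocallyAffineAt f x) :
    ∃ a, EventuallyAffine f l a := by
  obtain ⟨x₀, hx₀⟩ := Filter.nonempty_of_mem hsl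
  obtain ⟨a, b, h₀⟩ := hf x₀ hx₀
  exact ⟨a, b, mem_of_superset hsl (hs.eqOn_affine_of_isLocallyAffineAt hf hx₀ h₀)⟩

namespace InPLF

variable {f : Equiv.Perm ℝ}

theorem exists_eventuallyAffine_atTop (hf : InPLF f) : ∃ a, EventuallyAffine f atTop a := by
  obtain ⟨N, hN⟩ := hf.2.bddAbove
  exact exists_eventuallyAffine_of_isPreconnected isPreconnected_Ioi (Ioi_mem_atTop N)
    fun x hx => by_contra fun hna => (mem_Ioi.1 hx).not_ge (hN hna)

theorem exists_eventuallyAffine_atBot (hf : InPLF f) : ∃ a, EventuallyAffine f atBot a := by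
  obtain ⟨N, hN⟩ := hf.2.bddBelow
  exact exists_eventuallyAffine_of_isPreconnected isPreconnected_Iio (Iio_mem_atBot N)
    fun x hx => by_contra fun hna => (mem_Iio.1 hx).not_ge (hN hna)

theorem exists_hasEndGradients (hf : InPLF f) : ∃ aL aR, HasEndGradients f aL aR := by
  obtain ⟨aL, hL⟩ := hf.exists_eventuallyAffine_atBot
  obtain ⟨aR, hR⟩ := hf.exists_eventuallyAffine_atTop
  exact ⟨aL, aR, hL, hR⟩

end InPLF

namespace HasEndGradients

variable {f g : ℝ → ℝ} {aL aR aL' aR' cL cR : ℝ}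

theorem id : HasEndGradients (fun x => x) 1 1 :=
  ⟨⟨0, by simp⟩, ⟨0, by simp⟩⟩

theorem unique (h : HasEndGradients f aL aR) (h' : HasEndGradients f aL' aR') :
    aL = aL' ∧ aR = aR' :=
  ⟨h.1.unique atBot_le_cofinite h'.1, h.2.unique atTop_le_cofinite h'.2⟩

theorem mul_pos (h : HasEndGradients f aL aR) (hf : Continuous f) (hinj : Injective f) :
    0 < aR * aL := by
  rcases hf.strictMono_of_inj hinj with hmono | hanti
  · exact _root_.mul_pos (h.2.pos_of_strictMono atTop_le_cofinite hmono)
      (h.1.pos_of_strictMono atBot_le_cofinite hmono)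
  · exact mul_pos_of_neg_of_neg (h.2.neg_of_strictAnti atTop_le_cofinite hanti)
      (h.1.neg_of_strictAnti atBot_le_cofinite hanti)

theorem comp (hf : HasEndGradients f aL aR) (hg : HasEndGradients g cL cR)
    (hc : 0 < cR * cL) :
    ∃ bL bR, HasEndGradients (f ∘ g) bL bR ∧ bR * bL = aR * aL * (cR * cL) := by
  rcases lt_or_gt_of_ne (left_ne_zero_of_mul hc.ne') with hcR | hcR
  · have hcL : cL < 0 := neg_of_mul_pos_right hc hcR.le
    refine ⟨aR * cL, aL * cR, ⟨hf.2.comp hg.1 ?_, hf.1.comp hg.2 ?_⟩, by ring⟩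
    · exact hg.1.tendsto_atTop (tendsto_id.const_mul_atBot_of_neg hcL)
    · exact hg.2.tendsto_atBot (tendsto_id.const_mul_atTop_of_neg hcR)
  · have hcL : 0 < cL := pos_of_mul_pos_right hc hcR.le
    refine ⟨aL * cL, aR * cR, ⟨hf.1.comp hg.1 ?_, hf.2.comp hg.2 ?_⟩, by ring⟩
    · exact hg.1.tendsto_atBot (tendsto_id.const_mul_atBot hcL)
    · exact hg.2.tendsto_atTop (tendsto_id.const_mul_atTop hcR)

end HasEndGradients

def endGradientsMulEqOne : Submonoid (Equiv.Perm ℝ) where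
  carrier := {f | ∃ aL aR, HasEndGradients f aL aR ∧ aR * aL = 1}
  one_mem' := ⟨1, 1, HasEndGradients.id, one_mul 1⟩
  mul_mem' := by
    rintro f g ⟨aL, aR, hf, hfa⟩ ⟨cL, cR, hg, hgc⟩
    obtain ⟨bL, bR, hfg, hb⟩ := hf.comp hg (hgc ▸ one_pos)
    exact ⟨bL, bR, hfg, by rw [hb, hfa, hgc, one_mul]⟩

theorem InPLF.mem_endGradientsMulEqOne_of_mul_self {g : Equiv.Perm ℝ} (hg : InPLF g)
    (hgg : g * g = 1) : g ∈ endGradientsMulEqOne := by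
  obtain ⟨aL, aR, h⟩ := hg.exists_hasEndGradients
  have hpos : 0 < aR * aL := h.mul_pos hg.1.1 g.injective
  obtain ⟨bL, bR, hgg', hb⟩ := h.comp h hpos
  rw [← Equiv.Perm.coe_mul, hgg, Equiv.Perm.coe_one] at hgg'
  obtain ⟨rfl, rfl⟩ := hgg'.unique HasEndGradients.id
  exact ⟨aL, aR, h, by nlinarith⟩

theorem stmt_18_general (f : Equiv.Perm ℝ)
    (n : ℕ) (g : Fin n → Equiv.Perm ℝ)
    (hg : ∀ i, InPLF (g i) ∧ g i * g i = 1)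
    (hprod : f = (List.ofFn g).prod)
    (aL bL aR bR M : ℝ)
    (hL : ∀ x : ℝ, x ≤ -M → f x = aL * x + bL)
    (hR : ∀ x : ℝ, M ≤ x → f x = aR * x + bR) :
    aR * aL = 1 := by
  have hmem : f ∈ endGradientsMulEqOne := hprod ▸ Submonoid.list_prod_mem _ (by
    simpa [List.forall_mem_ofFn_iff] using
      fun i => (hg i).1.mem_endGradientsMulEqOne_of_mul_self (hg i).2)
  obtain ⟨cL, cR, hc, hcprod⟩ := hmem
  have hf : HasEndGradients f aL aR :=
    ⟨⟨bL, eventually_atBot.2 ⟨-M, hL⟩⟩, ⟨bR, eventually_atTop.2 ⟨M, hR⟩⟩⟩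
  obtain ⟨rfl, rfl⟩ := hf.unique hc
  exact hcprod

/-- If f ∈ PLF(ℝ) is a composite of finitely many involutions of PLF(ℝ), then its
leftmost and rightmost gradients satisfy γ_R(f) · γ_L(f) = 1. -/
theorem stmt_18 (f : Equiv.Perm ℝ) (hf : InPLF f)
    (n : ℕ) (g : Fin n → Equiv.Perm ℝ)
    (hg : ∀ i, InPLF (g i) ∧ g i * g i = 1)
    (hprod : f = (List.ofFn g).prod)
    (aL bL aR bR M : ℝ) (hM : 0 < M)
    (hL : ∀ x : ℝ, x ≤ -M → f x = aL * x + bL)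
    (hR : ∀ x : ℝ, M ≤ x → f x = aR * x + bR) :
    aR * aL = 1 :=
  stmt_18_general f n g hg hprod aL bL aR bR M hL hR
end
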